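/- arXiv:1309.4936 — 2 statements merged into one kernel-verified Lean document; each statement's English description precedes it below -/
import Mathlib

section
/- Let P_δ(t) = P₀·e^{t/(Kα)} − e^{t/(Kα)}·∫₀ᵗ e^{−τ/(Kα)} δ(τ) dτ be the biomass trajectory corresponding to a deviation δ ≥ 0 from the capacity-saturated uptake rate. If δ is continuous, nonnegative, and strictly positive at some point of (0, t_f), then the discounted biomass integral J₂(δ) = ∫₀^{t_f} P_δ(t)·e^{−φt} dt is strictly smaller than J₂(0) = P₀·∫₀^{t_f} e^{t/(Kα)}·e^{−φt} dt. -/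
open Real Set intervalIntegral

/-! Against the capacity-saturated trajectory `P₀ e^{t/(Kα)}`, a deviation `δ` costs the biomass
deficit `D(t) = e^{t/(Kα)} ∫₀ᵗ e^{-τ/(Kα)} δ τ dτ`. This is continuous and nonnegative, and
`D(t_f) > 0` because the integrand is continuous, nonnegative and positive at `t*`. Hence the
discounted integrands satisfy `(P₀ e^{t/(Kα)} - D(t)) e^{-φt} ≤ P₀ e^{t/(Kα)} e^{-φt}` on
`[0, t_f]`, strictly at `t = t_f`, and continuity makes the integral inequality strict. -/

noncomputable def biomassDeficit (c : ℝ) (δ : ℝ → ℝ) (t : ℝ) : ℝ :=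
  exp (t / c) * ∫ τ in (0 : ℝ)..t, exp (-τ / c) * δ τ

section BiomassDeficit

variable {c : ℝ} {δ : ℝ → ℝ}

theorem continuous_biomassDeficit (hδ : Continuous δ) : Continuous (biomassDeficit c δ) := by
  have hintegrand : Continuous fun τ => exp (-τ / c) * δ τ := by fun_prop
  exact (continuous_exp.comp (continuous_id.div_const c)).mul
    (continuous_primitive (fun _ _ => hintegrand.intervalIntegrable _ _) 0)

theorem biomassDeficit_nonneg {T t : ℝ} (hδ : ∀ τ ∈ Icc 0 T, 0 ≤ δ τ) (ht : t ∈ Icc 0 T) :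
    0 ≤ biomassDeficit c δ t :=
  mul_nonneg (exp_pos _).le <| integral_nonneg ht.1 fun τ hτ =>
    mul_nonneg (exp_pos _).le (hδ τ ⟨hτ.1, hτ.2.trans ht.2⟩)

theorem biomassDeficit_pos {t s : ℝ} (hδc : Continuous δ) (hδ : ∀ τ ∈ Icc 0 t, 0 ≤ δ τ)
    (ht : 0 < t) (hs : s ∈ Icc 0 t) (hδs : 0 < δ s) : 0 < biomassDeficit c δ t :=
  mul_pos (exp_pos _) <| integral_pos ht (by fun_prop)
    (fun τ hτ => mul_nonneg (exp_pos _).le (hδ τ (Ioc_subset_Icc_self hτ)))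
    ⟨s, hs, mul_pos (exp_pos _) hδs⟩

end BiomassDeficit

theorem deviation_strictly_decreases_discounted_biomass_general
    (K α φ P₀ tf : ℝ)
    (δ : ℝ → ℝ) (hδc : Continuous δ)
    (hδpos : ∀ t ∈ Set.Icc (0:ℝ) tf, 0 ≤ δ t)
    (tstar : ℝ) (htstar : tstar ∈ Set.Ioo (0:ℝ) tf) (hδstar : 0 < δ tstar) :
    (∫ t in (0:ℝ)..tf,
        (P₀ * Real.exp (t / (K * α)) -
          Real.exp (t / (K * α)) * ∫ τ in (0:ℝ)..t, Real.exp (-τ / (K * α)) * δ τ) *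
        Real.exp (-φ * t)) <
      P₀ * ∫ t in (0:ℝ)..tf, Real.exp (t / (K * α)) * Real.exp (-φ * t) := by
  have htf : 0 < tf := htstar.1.trans htstar.2
  have hD_cont := continuous_biomassDeficit (c := K * α) hδc
  change (∫ t in (0:ℝ)..tf, (P₀ * exp (t / (K * α)) - biomassDeficit (K * α) δ t) *
    exp (-φ * t)) < _
  rw [← integral_const_mul]
  refine integral_lt_integral_of_continuousOn_of_le_of_exists_lt htf
    (by fun_prop) (by fun_prop) (fun t ht => ?_) ⟨tf, right_mem_Icc.2 htf.le, ?_⟩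
  · have hD_nonneg := biomassDeficit_nonneg (c := K * α) hδpos (Ioc_subset_Icc_self ht)
    rw [← mul_assoc]
    gcongr
    exact sub_le_self _ hD_nonneg
  · have hD_pos := biomassDeficit_pos (c := K * α) hδc hδpos htf (Ioo_subset_Icc_self htstar) hδstar
    rw [← mul_assoc]
    gcongr
    exact sub_lt_self _ hD_pos

/-- Any nonzero deviation `δ ≥ 0` from the capacity-saturated uptake rate
strictly decreases the discounted biomass integral. -/
theorem deviation_strictly_decreases_discounted_biomass
    (K α φ P₀ tf : ℝ) (hK : 0 < K) (hα : 0 < α) (hφ : 0 ≤ φ) (hP₀ : 0 < P₀)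
    (htf : 0 < tf)
    (δ : ℝ → ℝ) (hδc : Continuous δ)
    (hδpos : ∀ t ∈ Set.Icc (0:ℝ) tf, 0 ≤ δ t)
    (tstar : ℝ) (htstar : tstar ∈ Set.Ioo (0:ℝ) tf) (hδstar : 0 < δ tstar) :
    (∫ t in (0:ℝ)..tf,
        (P₀ * Real.exp (t / (K * α)) -
          Real.exp (t / (K * α)) * ∫ τ in (0:ℝ)..t, Real.exp (-τ / (K * α)) * δ τ) *
        Real.exp (-φ * t)) <
      P₀ * ∫ t in (0:ℝ)..tf, Real.exp (t / (K * α)) * Real.exp (-φ * t) :=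
  deviation_strictly_decreases_discounted_biomass_general K α φ P₀ tf δ hδc hδpos tstar htstar
    hδstar
end

section
/- Among all continuous nonnegative uptake fluxes satisfying the capacity constraint V_y(t) ≤ P(t)/K (with Ṗ = V_y/α, P(0) = P₀ > 0), the minimal time t_f such that ∫₀^{t_f} V_y(τ) dτ = Y₀ is achieved by V_y = P/K, and this minimal time equals Kα·log(1 + Y₀/(αP₀)). -/
/-!
Along any admissible trajectory `Ṗ = V_y/α ≤ P/(Kα)`, so by Grönwall `P` grows at most like
`P₀ e^{t/(Kα)}`. Consuming `Y₀` raises `P` from `P₀` to `P₀ + Y₀/α`, which therefore takes at least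
`Kα·log(1 + Y₀/(αP₀))`; the saturated flux `V_y = P/K` has `P = P₀ e^{t/(Kα)}` and reaches
`P₀ + Y₀/α` exactly at that time.
-/

open Real Set

theorem le_mul_exp_of_hasDerivAt_le_mul {f f' : ℝ → ℝ} {c a b : ℝ} (hab : a ≤ b)
    (hf : ∀ t ∈ Icc a b, HasDerivAt f (f' t) t) (hf' : ∀ t ∈ Ico a b, f' t ≤ c * f t) :
    f b ≤ f a * exp (c * (b - a)) := by
  have hbound := le_gronwallBound_of_liminf_deriv_right_le (δ := f a) (ε := 0)
    (fun t ht => (hf t ht).continuousAt.continuousWithinAt)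
    (fun t ht _ hr => (hf t (Ico_subset_Icc_self ht)).hasDerivWithinAt.liminf_right_slope_le hr)
    le_rfl (by simpa using hf') b ⟨hab, le_rfl⟩
  rwa [gronwallBound_ε0] at hbound

theorem mul_log_one_add_div_le {a y s t : ℝ} (ha : 0 < a) (hs : 0 < s) (hy : 0 ≤ y)
    (h : a + y ≤ a * exp (t / s)) : s * log (1 + y / a) ≤ t := by
  have hratio : 1 + y / a ≤ exp (t / s) := by
    rwa [one_add_div ha.ne', div_le_iff₀ ha, mul_comm]
  have hlog := log_le_log (by positivity) hratio
  rwa [log_exp, le_div_iff₀ hs, mul_comm] at hlog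

theorem integral_exp_div_of_mul_log {s x : ℝ} (hs : s ≠ 0) (hx : 0 < x) :
    ∫ τ in (0:ℝ)..s * log x, exp (τ / s) = s * (x - 1) := by
  rw [intervalIntegral.integral_comp_div exp hs, zero_div, mul_div_cancel_left₀ _ hs,
    integral_exp, exp_log hx, exp_zero, smul_eq_mul]

/-- Time-optimality of the capacity-saturated uptake: any admissible control
needs at least `Kα·log(1 + Y₀/(αP₀))` time to consume the nutrient, and the
saturated control achieves this bound. -/
theorem minimal_metabolization_time
    (K α P₀ Y₀ : ℝ) (hK : 0 < K) (hα : 0 < α) (hP₀ : 0 < P₀) (hY₀ : 0 < Y₀) :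
    (∀ (Vy P : ℝ → ℝ), Continuous Vy → P 0 = P₀ →
      (∀ t ≥ (0:ℝ), HasDerivAt P (Vy t / α) t) →
      (∀ t ≥ (0:ℝ), 0 ≤ Vy t ∧ Vy t ≤ P t / K) →
      ∀ tf ≥ (0:ℝ), (∫ τ in (0:ℝ)..tf, Vy τ) = Y₀ →
        K * α * Real.log (1 + Y₀ / (α * P₀)) ≤ tf) ∧
    (∫ τ in (0:ℝ)..(K * α * Real.log (1 + Y₀ / (α * P₀))),
        (P₀ * Real.exp (τ / (K * α))) / K) = Y₀ := by
  have hKα : 0 < K * α := mul_pos hK hα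
  refine ⟨fun Vy P hVy hP0 hP hbound tf htf hY => ?_, ?_⟩
  · have hPtf : P tf = P₀ + Y₀ / α := by
      have hFTC := intervalIntegral.integral_eq_sub_of_hasDerivAt
        (fun t ht => hP t (uIcc_of_le htf ▸ ht).1) ((hVy.div_const α).intervalIntegrable 0 tf)
      rw [intervalIntegral.integral_div, hY, hP0] at hFTC
      linarith
    have hgrowth : P tf ≤ P₀ * exp (tf / (K * α)) := by
      have hgron := le_mul_exp_of_hasDerivAt_le_mul (c := (K * α)⁻¹) htf
        (fun t ht => hP t ht.1) fun t ht => ?_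
      · rwa [hP0, sub_zero, inv_mul_eq_div] at hgron
      · calc Vy t / α ≤ P t / K / α := by gcongr; exact (hbound t ht.1).2
          _ = (K * α)⁻¹ * P t := by field_simp
    rw [← div_div]
    exact mul_log_one_add_div_le hP₀ hKα (by positivity) (hPtf ▸ hgrowth)
  · simp_rw [mul_div_right_comm P₀, intervalIntegral.integral_const_mul]
    rw [integral_exp_div_of_mul_log hKα.ne' (by positivity)]
    field_simp
    ring
end
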